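/- arXiv:math/0011130 — 2 statements merged into one kernel-verified Lean document; each statement's English description precedes it below -/
import Mathlib

section
/- Let G be a group and H ≤ G a subgroup, and suppose H has index at most 2 in G. If G is torsion-free and H is infinite cyclic, then G is infinite cyclic. -/
theorem torsionFree_index_le_two_of_zsubgroup (G : Type*) [Group G]
    (hG : ∀ g : G, g ≠ 1 → ¬IsOfFinOrder g) (H : Subgroup G)
    (hH : Nonempty (H ≃* Multiplicative ℤ))
    (hindex : H.index = 1 ∨ H.index = 2) :
    Nonempty (G ≃* Multiplicative ℤ) := by
  obtain ⟨e⟩ := hH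
  have hinj : ∀ a : G, a ≠ 1 → ∀ s t : ℤ, a ^ s = a ^ t → s = t := fun a ha s t h =>
    injective_zpow_iff_not_isOfFinOrder.2 (hG a ha) h
  rcases hindex with h1 | h2
  · rw [Subgroup.index_eq_one] at h1
    exact ⟨Subgroup.topEquiv.symm.trans ((MulEquiv.subgroupCongr h1.symm).trans e)⟩
  · -- generator of H
    set x₀ : H := e.symm (Multiplicative.ofAdd 1) with hx₀
    set x : G := (x₀ : G) with hx
    have hxmem : x ∈ H := x₀.2
    have hpow : ∀ h : H, ∃ k : ℤ, (h : G) = x ^ k := by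
      intro h
      refine ⟨(e h).toAdd, ?_⟩
      have h0 : h = x₀ ^ (e h).toAdd := by
        apply e.injective
        rw [map_zpow, hx₀, MulEquiv.apply_symm_apply]
        conv_lhs => rw [← ofAdd_toAdd (e h)]
        rw [← ofAdd_zsmul, smul_eq_mul, mul_one]
      calc (h : G) = ((x₀ ^ (e h).toAdd : H) : G) := by rw [← h0]
        _ = x ^ (e h).toAdd := by push_cast; rfl
    have hx1 : x ≠ 1 := by
      intro h
      have h0 : x₀ = 1 := Subtype.ext h
      have h1 : Multiplicative.ofAdd (1 : ℤ) = 1 := by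
        rw [← MulEquiv.apply_symm_apply e (Multiplicative.ofAdd 1), ← hx₀, h0, map_one]
      have h2' := congrArg Multiplicative.toAdd h1
      simp at h2'
    have memH := fun a b => Subgroup.mul_mem_iff_of_index_two h2 (a := a) (b := b)
    have hne : H ≠ ⊤ := by
      intro h; rw [h, Subgroup.index_top] at h2; omega
    obtain ⟨g, hg⟩ : ∃ g, g ∉ H := by
      by_contra h
      push_neg at h
      exact hne ((Subgroup.eq_top_iff' H).2 h)
    have hgne : g ≠ 1 := fun h => hg (h ▸ H.one_mem)
    have hginv : g⁻¹ ∉ H := fun h => hg (inv_mem_iff.mp h)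
    have hc1 : g * x * g⁻¹ ∈ H := by
      rw [memH, memH]; simp [hxmem, hg, hginv]
    have hc2 : g⁻¹ * x * g ∈ H := by
      have : g⁻¹ * x * (g⁻¹)⁻¹ ∈ H := by
        rw [memH, memH]; simp [hxmem, hg, hginv]
      simpa using this
    obtain ⟨k, hk⟩ := hpow ⟨_, hc1⟩
    obtain ⟨j, hj⟩ := hpow ⟨_, hc2⟩
    simp only at hk hj
    have hkj : k * j = 1 := by
      have hxconj : x ^ (1 : ℤ) = x ^ (k * j) := by
        have h1 : g⁻¹ * (g * x * g⁻¹) * g = x := by group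
        calc x ^ (1:ℤ) = g⁻¹ * (x ^ k) * g := by rw [← hk, h1, zpow_one]
          _ = g⁻¹ * (x ^ k) * (g⁻¹)⁻¹ := by rw [inv_inv]
          _ = (g⁻¹ * x * (g⁻¹)⁻¹) ^ k := by rw [conj_zpow]
          _ = (x ^ j) ^ k := by rw [inv_inv, hj]
          _ = x ^ (k * j) := by rw [← zpow_mul, mul_comm]
      have := hinj x hx1 _ _ hxconj
      omega
    obtain ⟨n, hn⟩ := hpow ⟨_, Subgroup.sq_mem_of_index_two h2 g⟩
    simp only at hn
    have hgsq : g ^ (2 : ℤ) = x ^ n := by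
      rw [show (2:ℤ) = ((2:ℕ):ℤ) from rfl, zpow_natCast, hn]
    -- k = 1, i.e. g commutes with x
    have hk1 : k = 1 := by
      rcases Int.mul_eq_one_iff_eq_one_or_neg_one.mp hkj with ⟨hk', _⟩ | ⟨hk', _⟩
      · exact hk'
      · exfalso
        have h1 : g * x ^ n * g⁻¹ = x ^ (-n) := by
          rw [← conj_zpow, hk, hk', ← zpow_mul]
          norm_num
        rw [← hgsq] at h1
        have h2' : g * g ^ (2:ℤ) * g⁻¹ = g ^ (2:ℤ) := by group
        rw [h2', hgsq] at h1
        have hn0 : n = 0 := by have := hinj x hx1 _ _ h1; omega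
        rw [hn0, zpow_zero] at hgsq
        have := hinj g hgne 2 0 (by rw [zpow_zero]; exact hgsq)
        omega
    have hcomm : Commute x g := by
      have h1 : g * x * g⁻¹ = x := by rw [hk, hk1, zpow_one]
      have h2' := congrArg (· * g) h1
      simp only [inv_mul_cancel_right] at h2'
      exact h2'.symm
    rcases Int.even_or_odd n with ⟨m, hm⟩ | ⟨m, hm⟩
    · -- even case: contradiction
      exfalso
      have hysq : (g * x ^ (-m)) ^ (2:ℤ) = 1 := by
        rw [((hcomm.zpow_left (-m)).symm).mul_zpow, hgsq, ← zpow_mul, ← zpow_add,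
          show n + -m * 2 = 0 by omega, zpow_zero]
      have hyH : g * x ^ (-m) ∉ H := by
        rw [memH]; simp [hg, H.zpow_mem hxmem]
      have := hinj (g * x ^ (-m)) (fun h => hyH (h ▸ H.one_mem)) 2 0
        (by rw [zpow_zero]; exact hysq)
      omega
    · -- odd case: y = g * x^(-m) generates G
      set y : G := g * x ^ (-m) with hy
      have hyH : y ∉ H := by
        rw [hy, memH]; simp [hg, H.zpow_mem hxmem]
      have hy1 : y ≠ 1 := fun h => hyH (h ▸ H.one_mem)
      have hyinv : y⁻¹ ∉ H := fun h => hyH (inv_mem_iff.mp h)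
      have hysq : y ^ (2:ℤ) = x := by
        rw [hy, ((hcomm.zpow_left (-m)).symm).mul_zpow, hgsq, ← zpow_mul, ← zpow_add,
          show n + -m * 2 = 1 by omega, zpow_one]
      have hsurj : ∀ a : G, ∃ t : ℤ, a = y ^ t := by
        intro a
        by_cases ha : a ∈ H
        · obtain ⟨t, ht⟩ := hpow ⟨a, ha⟩
          have ht' : a = x ^ t := ht
          exact ⟨2 * t, by rw [ht', zpow_mul, hysq]⟩
        · have haH : a * y⁻¹ ∈ H := by
            rw [memH]; simp [ha, hyinv]
          obtain ⟨t, ht⟩ := hpow ⟨_, haH⟩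
          have ht' : a * y⁻¹ = x ^ t := ht
          refine ⟨2 * t + 1, ?_⟩
          have h3 : a = x ^ t * y := by rw [← ht']; group
          rw [h3, zpow_add, zpow_one, zpow_mul, hysq]
      refine ⟨(MulEquiv.ofBijective (zpowersHom G y) ⟨?_, ?_⟩).symm⟩
      · intro a b hab
        simp only [zpowersHom_apply] at hab
        have := hinj y hy1 _ _ hab
        exact Multiplicative.toAdd.injective this
      · intro a
        obtain ⟨t, ht⟩ := hsurj a
        exact ⟨Multiplicative.ofAdd t, by simp [ht]⟩
end

section
/- Let A : (-1,1) ∪ {∞} → ℝ ∪ {∞} be induced by a matrix (a b; c d) with ad - bc = 1, and suppose |a| > |c| > 0, |d| > |c|, and (a+b)/(c+d) < -1, with a < 0 < c, d > 0. Then A((-1,1)) ⊆ (-∞,-1) and A(∞) = a/c ∈ (-∞,-1); hence A((-1,1) ∪ {∞}) ∩ ((-1,1) ∪ {∞}) = ∅. -/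
theorem mobius_slope_interval_disjoint (a b c d : ℝ) (hdet : a * d - b * c = 1)
    (hac : |a| > |c|) (hc0 : |c| > 0) (hdc : |d| > |c|)
    (hab : (a + b) / (c + d) < -1) (ha : a < 0) (hc : 0 < c) (hd : 0 < d) :
    (∀ x ∈ Set.Ioo (-1 : ℝ) 1, (a * x + b) / (c * x + d) < -1) ∧
      a / c < -1 ∧
      (((fun x : ℝ => (a * x + b) / (c * x + d)) '' Set.Ioo (-1 : ℝ) 1 ∪ {a / c}) ∩
          Set.Ioo (-1 : ℝ) 1 = ∅) := by
  have hcabs : |c| = c := abs_of_pos hc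
  have hdgtc : d > c := by
    have := abs_of_pos hd; linarith [hdc, hcabs ▸ hdc]
  have haltc : a < -c := by
    have := abs_of_neg ha
    have : -a > c := by rw [← this, ← hcabs]; exact hac
    linarith
  have hcd : (0:ℝ) < c + d := by linarith
  have hab' : a + b < -(c + d) := by
    have := (div_lt_iff₀ hcd).mp hab; linarith
  have hdc' : (0:ℝ) < d - c := by linarith
  -- (b - a)*(c + d) = (a+b)*(d-c) - 2*(a*d - b*c)
  have hkey : (b - a) * (c + d) < -(d - c) * (c + d) := by
    nlinarith [mul_lt_mul_of_pos_right hab' hdc']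
  have h2 : b + d - a - c < 0 := by
    nlinarith [hkey]
  have h1 : a + b + c + d < 0 := by linarith
  have hmain : ∀ x ∈ Set.Ioo (-1 : ℝ) 1, (a * x + b) / (c * x + d) < -1 := by
    rintro x ⟨hx1, hx2⟩
    have hden : 0 < c * x + d := by nlinarith
    rw [div_lt_iff₀ hden]
    nlinarith [mul_lt_mul_of_pos_left h1 (show (0:ℝ) < 1 + x by linarith),
      mul_lt_mul_of_pos_left h2 (show (0:ℝ) < 1 - x by linarith)]
  have hac' : a / c < -1 := by
    rw [div_lt_iff₀ hc]; linarith
  refine ⟨hmain, hac', ?_⟩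
  rw [Set.eq_empty_iff_forall_notMem]
  rintro y ⟨hy1, hy2, hy3⟩
  rcases hy1 with ⟨x, hx, rfl⟩ | rfl
  · exact absurd (hmain x hx) (by simpa using not_lt.mpr hy2.le)
  · exact absurd hac' (not_lt.mpr (le_of_lt hy2))
end
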